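/- (Nash equilibrium / saddle point of the generalised IRL game.) In the finite MDP setting with geometric weights η(k) = (1−γ_η)γ_η^k, γ_η ∈ (0,1), let p₀ ∈ PMF S, π_E a policy, Ω̄ : (S → S × A → ℝ) → ℝ strictly concave, ψ : (S × A → ℝ) → ℝ convex, 𝒟 = { (s₀ ↦ (s,a) ↦ μ_π((s,a)|s₀)) : π a policy }, and L̄(μ,c) = −Ω̄(μ) − ψ(c) + ∑_{s₀} p₀(s₀) ∑_{(s,a)} c(s,a) · (μ(s₀)(s,a) − μ_{π_E}((s,a)|s₀)). Assume 𝒟 is convex, c̃ maximizes c ↦ inf_{μ ∈ 𝒟} L̄(μ,c), and μ̃ minimizes μ ↦ L̄(μ,c̃) over 𝒟. Then (μ̃, c̃) is a saddle point: for every c : S × A → ℝ and every μ ∈ 𝒟, L̄(μ̃, c) ≤ L̄(μ̃, c̃) ≤ L̄(μ, c̃). -/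

import Mathlib

open scoped BigOperators Classical

/-- `n`-step state–action distribution of the stationary policy `π` started at a state. -/
noncomputable def PstepS {S A : Type*} [Fintype S] [Fintype A]
    (P : S × A → PMF S) (π : S → PMF A) : ℕ → S → S × A → ℝ
  | 0, s₀, x => if x.1 = s₀ then (π x.1 x.2).toReal else 0
  | n + 1, s₀, x => ∑ y : S × A, PstepS P π n s₀ y * (P y x.1).toReal * (π x.1 x.2).toReal

/-- `n`-step state–action distribution of `π` started at a state–action pair. -/
noncomputable def PstepSA {S A : Type*} [Fintype S] [Fintype A]
    (P : S × A → PMF S) (π : S → PMF A) : ℕ → S × A → S × A → ℝ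
  | 0, y, x => if x = y then 1 else 0
  | n + 1, y, x => ∑ z : S × A, PstepSA P π n y z * (P z x.1).toReal * (π x.1 x.2).toReal

/-- η-weighted future state distribution, started at a state. -/
noncomputable def PetaS {S A : Type*} [Fintype S] [Fintype A]
    (P : S × A → PMF S) (π : S → PMF A) (η : ℕ → ℝ) (s₀ : S) (x : S × A) : ℝ :=
  ∑' k, η k * PstepS P π k s₀ x

/-- η-weighted future state distribution, started at a state–action pair. -/
noncomputable def PetaSA {S A : Type*} [Fintype S] [Fintype A]
    (P : S × A → PMF S) (π : S → PMF A) (η : ℕ → ℝ) (y : S × A) (x : S × A) : ℝ :=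
  ∑' k, η k * PstepSA P π k y x

/-- γ-discounted occupancy measure, started at a state. -/
noncomputable def rhoS {S A : Type*} [Fintype S] [Fintype A]
    (P : S × A → PMF S) (π : S → PMF A) (γ : ℝ) (s₀ : S) (x : S × A) : ℝ :=
  ∑' t, γ ^ t * PstepS P π t s₀ x

/-- γ-discounted occupancy measure, started at a state–action pair. -/
noncomputable def rhoSA {S A : Type*} [Fintype S] [Fintype A]
    (P : S × A → PMF S) (π : S → PMF A) (γ : ℝ) (y : S × A) (x : S × A) : ℝ :=
  ∑' t, γ ^ t * PstepSA P π t y x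

/-- η-weighted, γ-discounted future occupancy measure `μ_π`. -/
noncomputable def muS {S A : Type*} [Fintype S] [Fintype A]
    (P : S × A → PMF S) (π : S → PMF A) (γ : ℝ) (η : ℕ → ℝ) (s₀ : S) (x : S × A) : ℝ :=
  ∑' t, ∑' k, γ ^ t * η k * PstepS P π (t + k) s₀ x

/-!
Suppose `L̄(μ̃, c) > L̄(μ̃, c̃)` and move the cost from `c̃` towards `c` by a step `t`. Concavity
in the cost gives `L̄(μ, c_t) ≥ L̄(μ, c̃) + t (L̄(μ, c) - L̄(μ, c̃))`. Where the bracket is at least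
half its value at `μ̃`, this exceeds `L̄(μ̃, c̃) = inf_𝒟 L̄(·, c̃)` by a multiple of `t`. The
remaining points of `𝒟` lie in a compact set (occupancy measures are bounded by `1 / (1 - γ)`)
that avoids `μ̃`, the unique minimiser of the strictly convex `L̄(·, c̃)` on the closure of `𝒟`;
there `L̄(·, c̃)` exceeds its minimum by a fixed margin, which survives a small `t`. Hence
`inf_𝒟 L̄(·, c_t) > inf_𝒟 L̄(·, c̃)` for small `t > 0`, contradicting the maximality of `c̃`.
-/

theorem PMF.sum_toReal_eq_one {α : Type*} [Fintype α] (p : PMF α) :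
    ∑ a, (p a).toReal = 1 := by
  rw [← ENNReal.toReal_sum fun a _ => p.apply_ne_top a, ← tsum_fintype (L := .unconditional _),
    p.tsum_coe, ENNReal.toReal_one]

section StepDistribution

variable {S A : Type*} [Fintype S] [Fintype A] (P : S × A → PMF S) (π : S → PMF A)

theorem PstepS_nonneg (n : ℕ) (s₀ : S) (x : S × A) : 0 ≤ PstepS P π n s₀ x := by
  induction n generalizing x with
  | zero => unfold PstepS; split_ifs <;> positivity
  | succ n ih => unfold PstepS; exact Finset.sum_nonneg fun y _ => by have := ih y; positivity

theorem sum_PstepS (n : ℕ) (s₀ : S) : ∑ x, PstepS P π n s₀ x = 1 := by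
  induction n with
  | zero =>
    simp only [PstepS, Fintype.sum_prod_type, Finset.sum_ite_irrel, Finset.sum_const_zero]
    simp [PMF.sum_toReal_eq_one]
  | succ n ih =>
    simp only [PstepS]
    rw [Finset.sum_comm, ← ih]
    refine Finset.sum_congr rfl fun y _ => ?_
    simp only [Fintype.sum_prod_type, ← Finset.mul_sum, PMF.sum_toReal_eq_one, mul_one]

theorem PstepS_le_one (n : ℕ) (s₀ : S) (x : S × A) : PstepS P π n s₀ x ≤ 1 :=
  sum_PstepS P π n s₀ ▸
    Finset.single_le_sum (fun y _ => PstepS_nonneg P π n s₀ y) (Finset.mem_univ x)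

theorem abs_muS_le {γ : ℝ} (hγ₀ : 0 ≤ γ) (hγ₁ : γ < 1) {η : ℕ → ℝ} (hη₀ : ∀ k, 0 ≤ η k)
    (hη₁ : HasSum η 1) (s₀ : S) (x : S × A) : |muS P π γ η s₀ x| ≤ (1 - γ)⁻¹ := by
  rw [← Real.norm_eq_abs, muS]
  refine tsum_of_norm_bounded (hasSum_geometric_of_lt_one hγ₀ hγ₁) fun t => ?_
  refine tsum_of_norm_bounded (by simpa using hη₁.mul_left (γ ^ t)) fun k => ?_
  rw [Real.norm_eq_abs, abs_mul, abs_of_nonneg (by have := hη₀ k; positivity),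
    abs_of_nonneg (PstepS_nonneg P π _ s₀ x)]
  exact mul_le_of_le_one_right (by have := hη₀ k; positivity) (PstepS_le_one P π _ s₀ x)

end StepDistribution

theorem isBounded_range_muS {S A : Type*} [Fintype S] [Fintype A] (P : S × A → PMF S) {γ : ℝ}
    (hγ₀ : 0 ≤ γ) (hγ₁ : γ < 1) {η : ℕ → ℝ} (hη₀ : ∀ k, 0 ≤ η k) (hη₁ : HasSum η 1) :
    Bornology.IsBounded (Set.range fun (π : S → PMF A) s₀ x => muS P π γ η s₀ x) := by
  have hC : 0 ≤ (1 - γ)⁻¹ := inv_nonneg.2 (sub_nonneg.2 hγ₁.le)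
  refine isBounded_iff_forall_norm_le.2 ⟨(1 - γ)⁻¹, ?_⟩
  rintro _ ⟨π, rfl⟩
  refine (pi_norm_le_iff_of_nonneg hC).2 fun s₀ => (pi_norm_le_iff_of_nonneg hC).2 fun x => ?_
  exact abs_muS_le P π hγ₀ hγ₁ hη₀ hη₁ s₀ x

theorem StrictConvexOn.lt_of_isMinOn {E : Type*} [AddCommGroup E] [Module ℝ E] {s : Set E}
    {f : E → ℝ} {x y : E} (hf : StrictConvexOn ℝ s f) (hmin : IsMinOn f s x) (hx : x ∈ s)
    (hy : y ∈ s) (hne : y ≠ x) : f x < f y :=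
  lt_of_not_ge fun h => hne <| hf.eq_of_isMinOn (fun _ hz => h.trans (hmin hz)) hmin hy hx

theorem IsMinOn.exists_gt_forall_le_of_strictConvexOn {E : Type*} [AddCommGroup E] [Module ℝ E]
    [TopologicalSpace E] {f : E → ℝ} {D K : Set E} {μ₀ : E} (hmin : IsMinOn f D μ₀)
    (hK : IsCompact K) (hKD : K ⊆ closure D) (hμ₀K : μ₀ ∉ K)
    (hf : StrictConvexOn ℝ (closure D) f) (hfc : ContinuousOn f (closure D)) (hμ₀ : μ₀ ∈ D) :
    ∃ a, f μ₀ < a ∧ ∀ ν ∈ K, a ≤ f ν :=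
  hK.exists_forall_le' (hfc.mono hKD) fun _ hν =>
    hf.lt_of_isMinOn (hmin.closure hfc) (subset_closure hμ₀) (hKD hν)
      (ne_of_mem_of_not_mem hν hμ₀K)

theorem le_of_maximin_of_isMinOn {E C : Type*} [AddCommGroup E] [Module ℝ E] [TopologicalSpace E]
    [AddCommGroup C] [Module ℝ C] {L : E → C → ℝ} {D : Set E} {μ₀ : E} {c₀ : C}
    (hD : IsCompact (closure D)) (hcont : ∀ c, ContinuousOn (L · c) (closure D))
    (hconv : StrictConvexOn ℝ (closure D) (L · c₀)) (hconc : ∀ μ ∈ D, ConcaveOn ℝ Set.univ (L μ))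
    (hc₀ : ∀ c, ⨅ μ : D, L μ c ≤ ⨅ μ : D, L μ c₀) (hμ₀ : μ₀ ∈ D) (hmin : IsMinOn (L · c₀) D μ₀)
    (c : C) : L μ₀ c ≤ L μ₀ c₀ := by
  by_contra! hlt
  obtain ⟨Δ, hΔ, hΔdef⟩ : ∃ Δ, 0 < Δ ∧ Δ = L μ₀ c - L μ₀ c₀ := ⟨_, by linarith, rfl⟩
  have hgcont : ContinuousOn (fun ν => L ν c - L ν c₀) (closure D) := (hcont c).sub (hcont c₀)
  obtain ⟨a, hMa, hgap⟩ : ∃ a, L μ₀ c₀ < a ∧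
      ∀ ν ∈ closure D ∩ {ν | L ν c - L ν c₀ ≤ Δ / 2}, a ≤ L ν c₀ := by
    refine hmin.exists_gt_forall_le_of_strictConvexOn ?_ Set.inter_subset_left ?_ hconv
      (hcont c₀) hμ₀
    · exact hD.of_isClosed_subset (hgcont.preimage_isClosed_of_isClosed isClosed_closure
        isClosed_Iic) Set.inter_subset_left
    · intro hμ₀K
      have : Δ ≤ Δ / 2 := hΔdef ▸ hμ₀K.2
      linarith
  obtain ⟨B, hB0, hB⟩ : ∃ B ≤ 0, ∀ ν ∈ closure D, B ≤ L ν c - L ν c₀ := by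
    obtain ⟨B, hB⟩ := hD.bddBelow_image hgcont
    exact ⟨min B 0, min_le_right _ _, fun ν hν => (min_le_left _ _).trans (hB ⟨ν, hν, rfl⟩)⟩
  obtain ⟨t, ht0, ht1, hta⟩ : ∃ t : ℝ, 0 < t ∧ t ≤ 1 ∧ t * (Δ / 2 - B) ≤ a - L μ₀ c₀ := by
    refine ⟨min 1 ((a - L μ₀ c₀) / (Δ / 2 - B)),
      lt_min one_pos (div_pos (by linarith) (by linarith)), min_le_left _ _, ?_⟩
    exact (mul_le_mul_of_nonneg_right (min_le_right _ _) (by linarith)).trans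
      (div_mul_cancel₀ _ (by linarith)).le
  have hlow : ∀ μ ∈ D, L μ₀ c₀ + t * (Δ / 2) ≤ L μ ((1 - t) • c₀ + t • c) := by
    intro μ hμ
    have hconcμ : (1 - t) • L μ c₀ + t • L μ c ≤ L μ ((1 - t) • c₀ + t • c) :=
      (hconc μ hμ).2 trivial trivial (by linarith) ht0.le (by ring)
    simp only [smul_eq_mul] at hconcμ
    rcases le_or_gt (L μ c - L μ c₀) (Δ / 2) with hle | hgt
    · have hgapμ := hgap μ ⟨subset_closure hμ, hle⟩
      have hBμ := mul_le_mul_of_nonneg_left (hB μ (subset_closure hμ)) ht0.le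
      linarith
    · have hminμ : L μ₀ c₀ ≤ L μ c₀ := hmin hμ
      have hgtμ := mul_le_mul_of_nonneg_left hgt.le ht0.le
      linarith
  have : Nonempty D := ⟨⟨μ₀, hμ₀⟩⟩
  have hinf : ⨅ μ : D, L μ c₀ ≤ L μ₀ c₀ :=
    ciInf_le ⟨L μ₀ c₀, Set.forall_mem_range.2 fun μ : D => hmin μ.2⟩ ⟨μ₀, hμ₀⟩
  linarith [hc₀ ((1 - t) • c₀ + t • c), le_ciInf fun μ : D => hlow μ μ.2, mul_pos ht0 hΔ]

def weightedPairing {S X : Type*} [Fintype S] [Fintype X] (w : S → ℝ) :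
    (S → X → ℝ) →ₗ[ℝ] (X → ℝ) →ₗ[ℝ] ℝ :=
  LinearMap.mk₂ ℝ (fun μ c => ∑ s, w s * ∑ x, c x * μ s x)
    (fun _ _ _ => by simp only [Pi.add_apply, mul_add, Finset.sum_add_distrib])
    (fun _ _ _ => by simp only [Pi.smul_apply, smul_eq_mul, Finset.mul_sum, mul_left_comm])
    (fun _ _ _ => by simp only [Pi.add_apply, add_mul, mul_add, Finset.sum_add_distrib])
    (fun _ _ _ => by
      simp only [Pi.smul_apply, smul_eq_mul, Finset.mul_sum, mul_left_comm, mul_assoc])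

def irlLagrangian {E C : Type*} [AddCommGroup E] [Module ℝ E] [AddCommGroup C] [Module ℝ C]
    (B : E →ₗ[ℝ] C →ₗ[ℝ] ℝ) (Ω : E → ℝ) (ψ : C → ℝ) (μE μ : E) (c : C) : ℝ :=
  -Ω μ - ψ c + B (μ - μE) c

section Lagrangian

variable {E C : Type*} [AddCommGroup E] [Module ℝ E] [AddCommGroup C] [Module ℝ C]
  (B : E →ₗ[ℝ] C →ₗ[ℝ] ℝ) {Ω : E → ℝ} {ψ : C → ℝ} (μE : E)

theorem strictConvexOn_irlLagrangian (hΩ : StrictConcaveOn ℝ Set.univ Ω) (c : C) :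
    StrictConvexOn ℝ Set.univ (irlLagrangian B Ω ψ μE · c) := by
  refine ((hΩ.neg.add_convexOn ((B.flip c).convexOn convex_univ)).add_const
    (-ψ c - B μE c)).congr fun μ _ => ?_
  simp only [irlLagrangian, map_sub, LinearMap.sub_apply, LinearMap.flip_apply, Pi.add_apply,
    Pi.neg_apply]
  ring

theorem concaveOn_irlLagrangian (hψ : ConvexOn ℝ Set.univ ψ) (μ : E) :
    ConcaveOn ℝ Set.univ (irlLagrangian B Ω ψ μE μ) := by
  refine ((((B (μ - μE)).concaveOn convex_univ).sub hψ).add_const (-Ω μ)).congr fun c _ => ?_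
  simp only [irlLagrangian, Pi.add_apply, Pi.sub_apply]
  ring

end Lagrangian

theorem continuous_irlLagrangian {E C : Type*} [NormedAddCommGroup E] [NormedSpace ℝ E]
    [FiniteDimensional ℝ E] [AddCommGroup C] [Module ℝ C] (B : E →ₗ[ℝ] C →ₗ[ℝ] ℝ) {Ω : E → ℝ}
    {ψ : C → ℝ} (μE : E) (hΩ : ConcaveOn ℝ Set.univ Ω) (c : C) :
    Continuous (irlLagrangian B Ω ψ μE · c) :=
  ((continuousOn_univ.mp (hΩ.continuousOn isOpen_univ)).neg.sub continuous_const).add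
    ((B.flip c).continuous_of_finiteDimensional.comp (continuous_id.sub continuous_const))

theorem stmt11_general {S A : Type*} [Fintype S] [Fintype A]
    (P : S × A → PMF S) (γ γη : ℝ)
    (hγ : γ ∈ Set.Ioo (0 : ℝ) 1) (hγη : γη ∈ Set.Ioo (0 : ℝ) 1)
    (η : ℕ → ℝ) (hη : ∀ k, η k = (1 - γη) * γη ^ k)
    (p₀ : PMF S) (πE : S → PMF A)
    (Ωb : (S → S × A → ℝ) → ℝ) (hΩ : StrictConcaveOn ℝ Set.univ Ωb)
    (ψ : (S × A → ℝ) → ℝ) (hψ : ConvexOn ℝ Set.univ ψ)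
    -- the set of η-weighted occupancy measures
    (𝒟 : Set (S → S × A → ℝ))
    (h𝒟 : 𝒟 = { μ | ∃ π : S → PMF A, μ = fun s₀ x => muS P π γ η s₀ x })
    (h𝒟conv : Convex ℝ 𝒟)
    -- the IRL Lagrangian
    (Lbar : (S → S × A → ℝ) → (S × A → ℝ) → ℝ)
    (hL : Lbar = fun μ c => -Ωb μ - ψ c +
      ∑ s₀ : S, (p₀ s₀).toReal * ∑ x : S × A, c x * (μ s₀ x - muS P πE γ η s₀ x))
    (ctil : S × A → ℝ) (μtil : S → S × A → ℝ)
    -- `ctil` maximizes `c ↦ inf_{μ ∈ 𝒟} L̄(μ, c)`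
    (hctil : ∀ c : S × A → ℝ, (⨅ μ : 𝒟, Lbar (↑μ) c) ≤ ⨅ μ : 𝒟, Lbar (↑μ) ctil)
    -- `μtil` minimizes `μ ↦ L̄(μ, ctil)` over `𝒟`
    (hμtil : μtil ∈ 𝒟 ∧ ∀ μ ∈ 𝒟, Lbar μtil ctil ≤ Lbar μ ctil) :
    -- `(μtil, ctil)` is a saddle point of `L̄`
    (∀ c : S × A → ℝ, Lbar μtil c ≤ Lbar μtil ctil) ∧
    (∀ μ ∈ 𝒟, Lbar μtil ctil ≤ Lbar μ ctil) := by
  obtain ⟨hμD, hμmin⟩ := hμtil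
  have hLbar : Lbar = irlLagrangian (weightedPairing fun s => (p₀ s).toReal) Ωb ψ
      fun s₀ x => muS P πE γ η s₀ x := hL
  have hη₀ : ∀ k, 0 ≤ η k := fun k =>
    hη k ▸ mul_nonneg (sub_nonneg.2 hγη.2.le) (pow_nonneg hγη.1.le k)
  have hη₁ : HasSum η 1 := by
    have := (hasSum_geometric_of_lt_one hγη.1.le hγη.2).mul_left (1 - γη)
    rwa [mul_inv_cancel₀ (sub_ne_zero.2 hγη.2.ne'), ← funext hη] at this
  have h𝒟compact : IsCompact (closure 𝒟) := by
    subst h𝒟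
    refine ((isBounded_range_muS P hγ.1.le hγ.2 hη₀ hη₁).subset ?_).isCompact_closure
    rintro _ ⟨π, rfl⟩
    exact ⟨π, rfl⟩
  subst hLbar
  refine ⟨le_of_maximin_of_isMinOn h𝒟compact
    (fun c => (continuous_irlLagrangian _ _ hΩ.concaveOn c).continuousOn)
    ((strictConvexOn_irlLagrangian _ _ hΩ ctil).subset (Set.subset_univ _) h𝒟conv.closure)
    (fun μ _ => concaveOn_irlLagrangian _ _ hψ μ) hctil hμD hμmin, hμmin⟩

theorem stmt11 {S A : Type*} [Fintype S] [Fintype A] [Nonempty S] [Nonempty A]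
    (P : S × A → PMF S) (γ γη : ℝ)
    (hγ : γ ∈ Set.Ioo (0 : ℝ) 1) (hγη : γη ∈ Set.Ioo (0 : ℝ) 1)
    (η : ℕ → ℝ) (hη : ∀ k, η k = (1 - γη) * γη ^ k)
    (p₀ : PMF S) (πE : S → PMF A)
    (Ωb : (S → S × A → ℝ) → ℝ) (hΩ : StrictConcaveOn ℝ Set.univ Ωb)
    (ψ : (S × A → ℝ) → ℝ) (hψ : ConvexOn ℝ Set.univ ψ)
    -- the set of η-weighted occupancy measures
    (𝒟 : Set (S → S × A → ℝ))
    (h𝒟 : 𝒟 = { μ | ∃ π : S → PMF A, μ = fun s₀ x => muS P π γ η s₀ x })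
    (h𝒟conv : Convex ℝ 𝒟)
    -- the IRL Lagrangian
    (Lbar : (S → S × A → ℝ) → (S × A → ℝ) → ℝ)
    (hL : Lbar = fun μ c => -Ωb μ - ψ c +
      ∑ s₀ : S, (p₀ s₀).toReal * ∑ x : S × A, c x * (μ s₀ x - muS P πE γ η s₀ x))
    (ctil : S × A → ℝ) (μtil : S → S × A → ℝ)
    -- `ctil` maximizes `c ↦ inf_{μ ∈ 𝒟} L̄(μ, c)`
    (hctil : ∀ c : S × A → ℝ, (⨅ μ : 𝒟, Lbar (↑μ) c) ≤ ⨅ μ : 𝒟, Lbar (↑μ) ctil)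
    -- `μtil` minimizes `μ ↦ L̄(μ, ctil)` over `𝒟`
    (hμtil : μtil ∈ 𝒟 ∧ ∀ μ ∈ 𝒟, Lbar μtil ctil ≤ Lbar μ ctil) :
    -- `(μtil, ctil)` is a saddle point of `L̄`
    (∀ c : S × A → ℝ, Lbar μtil c ≤ Lbar μtil ctil) ∧
    (∀ μ ∈ 𝒟, Lbar μtil ctil ≤ Lbar μ ctil) :=
  stmt11_general P γ γη hγ hγη η hη p₀ πE Ωb hΩ ψ hψ 𝒟 h𝒟 h𝒟conv Lbar hL ctil μtil hctil hμtil
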